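/- For every color c ∈ χ(E) and every real constant C ≥ 2: Σ_{c' ∈ χ(E(T(c))) \ {c}} 2^{−C·(φ(c') − φ(c))} < 2^{2−C}. -/
import Mathlib


open scoped Classical

noncomputable section

/-- A finite rooted metric tree.  Each non-root vertex `v` determines the edge
`(v, parent v)`; edges are identified with their lower endpoints. -/
structure FinTree : Type 1 where
  V : Type
  fin : Fintype V
  root : V
  parent : V → V
  parent_root : parent root = root
  reaches_root : ∀ v : V, ∃ n : ℕ, parent^[n] v = root
  len : V → ℝ
  len_nonneg : ∀ v : V, 0 ≤ len v

attribute [instance] FinTree.fin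

namespace FinTree

variable (T : FinTree)

/-- `u` is a (weak) ancestor of `v`. -/
def Anc (u v : T.V) : Prop := ∃ n : ℕ, T.parent^[n] v = u

/-- The set of edges (identified with their lower endpoints) on the path `P_v`
from the root to `v`. -/
def pathToRoot (v : T.V) : Finset T.V :=
  Finset.univ.filter fun u => u ≠ T.root ∧ T.Anc u v

/-- The set of edges on the unique path between `x` and `y`. -/
def pathEdges (x y : T.V) : Finset T.V :=
  (T.pathToRoot x \ T.pathToRoot y) ∪ (T.pathToRoot y \ T.pathToRoot x)

/-- The shortest-path pseudometric `d_T` of the tree. -/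
def dist (x y : T.V) : ℝ := ∑ e ∈ T.pathEdges x y, T.len e

/-- The set of all edges of the tree. -/
def edges : Finset T.V := Finset.univ.filter fun u => u ≠ T.root

/-- The depth of a vertex (number of edges on the path to the root). -/
def depth (v : T.V) : ℕ := Nat.find (T.reaches_root v)

/-- `x` lies on the path between `a` and `b`. -/
def OnPath (x a b : T.V) : Prop := T.pathEdges a x ⊆ T.pathEdges a b

/-- `T` is the complete `k`-ary tree of height `h` with unit edge lengths. -/
def IsCompleteKAry (k h : ℕ) : Prop :=
  (∀ v : T.V, v ≠ T.root → T.len v = 1) ∧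
  (∀ v : T.V, T.depth v ≤ h) ∧
  ∀ v : T.V, T.depth v < h →
    (Finset.univ.filter fun u : T.V => T.parent u = v ∧ u ≠ v).card = k

/-- A monotone coloring: every color class is a connected subset of the edge
set of some root-leaf path. -/
def IsMonotone (χ : T.V → ℕ) : Prop :=
  ∀ u v : T.V, u ≠ T.root → v ≠ T.root → χ u = χ v →
    (T.Anc u v ∨ T.Anc v u) ∧
      ∀ w : T.V, w ≠ T.root → T.Anc u w → T.Anc w v → χ w = χ u

/-- The multiplicity `M(χ)` of a coloring. -/
def mult (χ : T.V → ℕ) : ℕ :=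
  Finset.univ.sup fun v : T.V => ((T.pathToRoot v).image χ).card

/-- `len_χ(c)`: the total length of the color class of `c`. -/
def colorLen (χ : T.V → ℕ) (c : ℕ) : ℝ :=
  ∑ e ∈ T.edges.filter (fun e => χ e = c), T.len e

/-- The set of colors `C_χ(x,y;δ)`. -/
def sigColors (χ : T.V → ℕ) (x y : T.V) (δ : ℝ) : Finset ℕ :=
  (((T.pathToRoot x).image χ \ (T.pathToRoot y).image χ) ∪
      ((T.pathToRoot y).image χ \ (T.pathToRoot x).image χ)).filter
    fun c => (∑ e ∈ (T.pathEdges x y).filter (fun e => χ e = c), T.len e) ≤ δ * T.colorLen χ c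

/-- `ρ_χ(x,y;δ)`. -/
def rho (χ : T.V → ℕ) (x y : T.V) (δ : ℝ) : ℝ :=
  ∑ c ∈ T.sigColors χ x y δ, T.colorLen χ c

/-- The topmost edge of the color class of `c` (junk value if none exists). -/
def topEdge (χ : T.V → ℕ) (c : ℕ) : T.V :=
  if h : ∃ e : T.V, e ≠ T.root ∧ χ e = c ∧ ∀ e' : T.V, e' ≠ T.root → χ e' = c → T.Anc e e'
  then h.choose else T.root

/-- `v_c`: the vertex of `γ_c` closest to the root. -/
def vcol (χ : T.V → ℕ) (c : ℕ) : T.V := T.parent (T.topEdge χ c)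

/-- The edge set `E(T(c))` of the subtree under the color `c`; for the root
color `c₀` it is all of `E`. -/
def subEdges (χ : T.V → ℕ) (c₀ c : ℕ) : Finset T.V :=
  if c = c₀ then T.edges else T.edges.filter fun e => T.Anc (T.topEdge χ c) e

/-- The parent color `ρ(c) = χ(v_c, p(v_c))`, with the convention
`χ(r,r) = c₀`. -/
def parentColor (χ : T.V → ℕ) (c₀ c : ℕ) : ℕ :=
  if T.vcol χ c = T.root then c₀ else χ (T.vcol χ c)

/-- `κ(c) = ⌊log₂(|E(T(ρ(c)))| / |E(T(c))|)⌋ + 1`. -/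
def kappa (χ : T.V → ℕ) (c₀ c : ℕ) : ℤ :=
  ⌊Real.logb 2 (((T.subEdges χ c₀ (T.parentColor χ c₀ c)).card : ℝ) /
      ((T.subEdges χ c₀ c).card : ℝ))⌋ + 1

/-- `φ(c₀) = 0` and `φ(c) = κ(c) + φ(ρ(c))`; equivalently
`φ(c) = Σ_{c' ∈ χ(E(P_{v_c})) ∪ {c}} κ(c')`. -/
def phi (χ : T.V → ℕ) (c₀ c : ℕ) : ℤ :=
  if c = c₀ then 0
  else T.kappa χ c₀ c + ∑ c' ∈ (T.pathToRoot (T.vcol χ c)).image χ, T.kappa χ c₀ c'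

/-- `m(T)`: the minimum positive edge length. -/
def minLen : ℝ := sInf {x : ℝ | ∃ e : T.V, e ≠ T.root ∧ 0 < T.len e ∧ T.len e = x}

/-- `⌊log₂( m(T) / (M(χ) + log₂|E|) )⌋`, the scale below which all `τ_i` vanish. -/
def iMin (χ : T.V → ℕ) : ℤ :=
  ⌊Real.logb 2 (T.minLen / ((T.mult χ : ℝ) + Real.logb 2 (T.edges.card : ℝ)))⌋

/-- `τ` is the family of scale selectors: `τ_i(v) = 0` for `i < iMin`, and for
`i ≥ iMin`,
`τ_i(v) = min( ⌈(d_T(v,v_c) − min(d_T(v,v_c), Σ_{j<i} 2^j τ_j(v)))/2^i⌉,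
               φ(c) − Σ_{c' ∈ χ(E(P_v))} τ_i(v_{c'}) )` where `c = χ(v,p(v))`. -/
def IsScaleSelector (χ : T.V → ℕ) (c₀ : ℕ) (τ : ℤ → T.V → ℕ) : Prop :=
  (∀ v : T.V, ∀ i : ℤ, i < T.iMin χ → τ i v = 0) ∧
  ∀ v : T.V, v ≠ T.root → ∀ i : ℤ, T.iMin χ ≤ i →
    (τ i v : ℤ) =
      min
        ⌈(T.dist v (T.vcol χ (χ v)) -
            min (T.dist v (T.vcol χ (χ v)))
              (∑ j ∈ Finset.Ico (T.iMin χ) i, (2 : ℝ) ^ j * (τ j v : ℝ))) / (2 : ℝ) ^ i⌉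
        (T.phi χ c₀ (χ v) - ∑ c' ∈ (T.pathToRoot v).image χ, (τ i (T.vcol χ c') : ℤ))

/-- The matrix `Δ_i(v) ∈ ℝ^{m×t}`. -/
def Delta (χ : T.V → ℕ) (c₀ : ℕ) (τ : ℤ → T.V → ℕ) (m t : ℕ) (i : ℤ) (v : T.V) :
    Matrix (Fin m) (Fin t) ℝ := fun j k =>
  let d : ℝ := T.dist v (T.vcol χ (χ v))
  let s : ℝ := ∑ l ∈ Finset.Ico (T.iMin χ) i, (2 : ℝ) ^ l * (τ l v : ℝ)
  let α : ℤ := ∑ c' ∈ (T.pathToRoot v).image χ, ((t : ℤ) ^ 2 * (τ i (T.vcol χ c') : ℤ))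
  let β : ℤ := α + min ((t : ℤ) ^ 2 * (τ i v : ℤ)) ⌊(d - s) * (t : ℝ) ^ 2 / (2 : ℝ) ^ i⌋
  if (k : ℕ) = 0 then
    if α < (j : ℤ) + 1 ∧ (j : ℤ) + 1 ≤ β then (2 : ℝ) ^ i / (t : ℝ) ^ 2
    else if (j : ℤ) + 1 = β + 1 ∧ β - α < (t : ℤ) ^ 2 * (τ i v : ℤ) then
      d - (s + ((β - α : ℤ) : ℝ) * ((2 : ℝ) ^ i / (t : ℝ) ^ 2))
    else 0
  else 0

end FinTree

/-- The entrywise ℓ₁ norm of a matrix. -/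
def matOne {m t : ℕ} (A : Matrix (Fin m) (Fin t) ℝ) : ℝ := ∑ j, ∑ k, |A j k|

namespace FinTree

variable {T : FinTree}

lemma iterate_parent_root (T : FinTree) (n : ℕ) : T.parent^[n] T.root = T.root := by
  induction n with
  | zero => rfl
  | succ k ih => rw [Function.iterate_succ_apply', ih, T.parent_root]

lemma anc_refl (T : FinTree) (v : T.V) : T.Anc v v := ⟨0, rfl⟩

lemma anc_trans {u v w : T.V} (h1 : T.Anc u v) (h2 : T.Anc v w) : T.Anc u w := by
  obtain ⟨n, hn⟩ := h1; obtain ⟨m, hm⟩ := h2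
  exact ⟨n + m, by rw [Function.iterate_add_apply, hm, hn]⟩

lemma anc_parent (T : FinTree) (v : T.V) : T.Anc (T.parent v) v := ⟨1, rfl⟩

lemma eq_root_of_anc_root {u : T.V} (h : T.Anc u T.root) : u = T.root := by
  obtain ⟨n, hn⟩ := h; rw [iterate_parent_root] at hn; exact hn.symm

lemma eq_root_of_parent_fixed {v : T.V} (h : T.parent v = v) : v = T.root := by
  obtain ⟨n, hn⟩ := T.reaches_root v
  have : ∀ m : ℕ, T.parent^[m] v = v := by
    intro m; induction m with
    | zero => rfl
    | succ k ih => rw [Function.iterate_succ_apply', ih, h]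
  rw [this n] at hn; exact hn

lemma depth_spec (T : FinTree) (v : T.V) : T.parent^[T.depth v] v = T.root :=
  Nat.find_spec (T.reaches_root v)

lemma depth_le {v : T.V} {n : ℕ} (h : T.parent^[n] v = T.root) : T.depth v ≤ n :=
  Nat.find_le h

lemma depth_root (T : FinTree) : T.depth T.root = 0 :=
  Nat.le_zero.mp (depth_le (by rfl))

lemma eq_root_of_depth_zero {v : T.V} (h : T.depth v = 0) : v = T.root := by
  have := T.depth_spec v; rwa [h] at this

/-- For `u ≠ root`, an ancestor relation gives the depth decomposition. -/
lemma anc_parts {u v : T.V} (hu : u ≠ T.root) (h : T.Anc u v) :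
    ∃ n : ℕ, T.parent^[n] v = u ∧ T.depth u + n ≤ T.depth v := by
  obtain ⟨n, hn⟩ := h
  have hnle : n ≤ T.depth v := by
    by_contra hlt
    push_neg at hlt
    have : T.parent^[n] v = T.root := by
      have : n = (n - T.depth v) + T.depth v := by omega
      rw [this, Function.iterate_add_apply, T.depth_spec, iterate_parent_root]
    rw [hn] at this; exact hu this
  have hdu : T.depth u ≤ T.depth v - n := by
    apply depth_le
    have : T.depth v = (T.depth v - n) + n := by omega
    rw [← hn, ← Function.iterate_add_apply, ← this, T.depth_spec]
  exact ⟨n, hn, by omega⟩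

lemma anc_depth_le {u v : T.V} (h : T.Anc u v) : T.depth u ≤ T.depth v := by
  by_cases hu : u = T.root
  · rw [hu, depth_root]; exact Nat.zero_le _
  · obtain ⟨n, _, hle⟩ := anc_parts hu h; omega

lemma anc_antisymm {u v : T.V} (h1 : T.Anc u v) (h2 : T.Anc v u) : u = v := by
  by_cases hu : u = T.root
  · rw [hu] at h2 ⊢; exact (eq_root_of_anc_root h2).symm
  · by_cases hv : v = T.root
    · rw [hv] at h1; exact absurd (eq_root_of_anc_root h1) hu
    · obtain ⟨n, hn, hle1⟩ := anc_parts hu h1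
      obtain ⟨m, hm, hle2⟩ := anc_parts hv h2
      have : n = 0 := by omega
      rw [this] at hn; exact hn.symm

lemma anc_depth_lt {u v : T.V} (h : T.Anc u v) (hne : u ≠ v) : T.depth u < T.depth v := by
  by_cases hu : u = T.root
  · rw [hu, depth_root]
    rcases Nat.eq_zero_or_pos (T.depth v) with h0 | h0
    · exact absurd (eq_root_of_depth_zero h0) (by rw [hu] at hne; exact fun hh => hne hh.symm)
    · exact h0
  · obtain ⟨n, hn, hle⟩ := anc_parts hu h
    have : n ≠ 0 := fun h0 => hne (by rw [h0] at hn; exact hn.symm)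
    omega

lemma anc_total_of_anc {u v w : T.V} (h1 : T.Anc u w) (h2 : T.Anc v w) :
    T.Anc u v ∨ T.Anc v u := by
  obtain ⟨n, hn⟩ := h1; obtain ⟨m, hm⟩ := h2
  rcases le_total n m with hle | hle
  · right
    exact ⟨m - n, by rw [← hn, ← Function.iterate_add_apply, Nat.sub_add_cancel hle, hm]⟩
  · left
    exact ⟨n - m, by rw [← hm, ← Function.iterate_add_apply, Nat.sub_add_cancel hle, hn]⟩

lemma anc_parent_of_anc {u v : T.V} (h : T.Anc u v) (hne : u ≠ v) : T.Anc u (T.parent v) := by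
  obtain ⟨n, hn⟩ := h
  match n, hn with
  | 0, hn => exact absurd hn.symm hne
  | Nat.succ k, hn => exact ⟨k, by rw [← hn, ← Function.iterate_succ_apply]⟩

lemma ne_root_of_anc {u v : T.V} (h : T.Anc u v) (hu : u ≠ T.root) : v ≠ T.root := by
  intro hv; rw [hv] at h; exact hu (eq_root_of_anc_root h)

lemma depth_parent_lt {v : T.V} (hv : v ≠ T.root) : T.depth (T.parent v) < T.depth v :=
  anc_depth_lt (T.anc_parent v) (fun h => hv (eq_root_of_parent_fixed h))

end FinTree
namespace FinTree

variable {T : FinTree} {χ : T.V → ℕ}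

lemma mem_edges {e : T.V} : e ∈ T.edges ↔ e ≠ T.root := by
  simp [edges]

lemma mem_pathToRoot {u v : T.V} : u ∈ T.pathToRoot v ↔ u ≠ T.root ∧ T.Anc u v := by
  simp [pathToRoot]

lemma topEdge_exists (hχ : T.IsMonotone χ) {c : ℕ}
    (hc : ∃ e : T.V, e ≠ T.root ∧ χ e = c) :
    ∃ e : T.V, e ≠ T.root ∧ χ e = c ∧ ∀ e' : T.V, e' ≠ T.root → χ e' = c → T.Anc e e' := by
  classical
  set S : Finset T.V := Finset.univ.filter (fun e => e ≠ T.root ∧ χ e = c) with hS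
  have hSne : S.Nonempty := by
    obtain ⟨e, he, hce⟩ := hc
    exact ⟨e, by simp [hS, he, hce]⟩
  obtain ⟨e₀, he₀S, hmin⟩ := S.exists_min_image T.depth hSne
  simp only [hS, Finset.mem_filter, Finset.mem_univ, true_and] at he₀S
  refine ⟨e₀, he₀S.1, he₀S.2, fun e' he' hce' => ?_⟩
  have he'S : e' ∈ S := by simp [hS, he', hce']
  rcases (hχ e₀ e' he₀S.1 he' (he₀S.2.trans hce'.symm)).1 with h | h
  · exact h
  · by_cases heq : e' = e₀
    · rw [heq]; exact T.anc_refl e₀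
    · exact absurd (anc_depth_lt h heq) (not_lt.mpr (hmin e' he'S))

lemma topEdge_spec (hχ : T.IsMonotone χ) {c : ℕ}
    (hc : ∃ e : T.V, e ≠ T.root ∧ χ e = c) :
    T.topEdge χ c ≠ T.root ∧ χ (T.topEdge χ c) = c ∧
      ∀ e' : T.V, e' ≠ T.root → χ e' = c → T.Anc (T.topEdge χ c) e' := by
  have h := topEdge_exists hχ hc
  rw [topEdge, dif_pos h]
  exact h.choose_spec

end FinTree
namespace FinTree

variable {T : FinTree} {χ : T.V → ℕ} {c₀ : ℕ}

lemma ne_c0 (hc₀ : ∀ e : T.V, e ≠ T.root → χ e ≠ c₀) {c : ℕ}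
    (hc : ∃ e : T.V, e ≠ T.root ∧ χ e = c) : c ≠ c₀ := by
  obtain ⟨e, he, hce⟩ := hc; exact hce ▸ hc₀ e he

lemma mem_subEdges {c : ℕ} (hcc₀ : c ≠ c₀) {e : T.V} :
    e ∈ T.subEdges χ c₀ c ↔ e ≠ T.root ∧ T.Anc (T.topEdge χ c) e := by
  rw [subEdges, if_neg hcc₀]
  simp [edges, Finset.mem_filter, and_comm]

lemma topEdge_mem_subEdges (hχ : T.IsMonotone χ) {c : ℕ} (hcc₀ : c ≠ c₀)
    (hc : ∃ e : T.V, e ≠ T.root ∧ χ e = c) :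
    T.topEdge χ c ∈ T.subEdges χ c₀ c :=
  (mem_subEdges hcc₀).mpr ⟨(topEdge_spec hχ hc).1, T.anc_refl _⟩

lemma chi_mem_subEdges {c : ℕ} (hcc₀ : c ≠ c₀) {e : T.V} (he : e ∈ T.subEdges χ c₀ c) :
    ∃ e' : T.V, e' ≠ T.root ∧ χ e' = χ e :=
  ⟨e, ((mem_subEdges hcc₀).mp he).1, rfl⟩

/-- If `c' ≠ c` appears on an edge of `T(c)`, its top edge is strictly below `topEdge c`. -/
lemma topEdge_anc_topEdge (hχ : T.IsMonotone χ) {c c' : ℕ} (hcc₀ : c ≠ c₀)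
    (hc : ∃ e : T.V, e ≠ T.root ∧ χ e = c) {e : T.V}
    (he : e ∈ T.subEdges χ c₀ c) (hce : χ e = c') (hne : c' ≠ c) :
    T.Anc (T.topEdge χ c) (T.topEdge χ c') ∧ T.topEdge χ c' ≠ T.topEdge χ c := by
  obtain ⟨heroot, hanc⟩ := (mem_subEdges hcc₀).mp he
  have hc' : ∃ e' : T.V, e' ≠ T.root ∧ χ e' = c' := ⟨e, heroot, hce⟩
  obtain ⟨hr, hcol, hmin⟩ := topEdge_spec hχ hc
  obtain ⟨hr', hcol', hmin'⟩ := topEdge_spec hχ hc'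
  have hne' : T.topEdge χ c' ≠ T.topEdge χ c := by
    intro h; exact hne (by rw [← hcol', h, hcol])
  have h2 : T.Anc (T.topEdge χ c') e := hmin' e heroot hce
  rcases anc_total_of_anc hanc h2 with h | h
  · exact ⟨h, hne'⟩
  · exfalso
    apply hne
    have := (hχ (T.topEdge χ c') e hr' heroot (by rw [hcol', hce])).2
      (T.topEdge χ c) hr h hanc
    rw [hcol, hcol'] at this
    exact this.symm

lemma subEdges_subset (hχ : T.IsMonotone χ) {c c' : ℕ} (hcc₀ : c ≠ c₀) (hc'c₀ : c' ≠ c₀)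
    (hc : ∃ e : T.V, e ≠ T.root ∧ χ e = c) {e : T.V}
    (he : e ∈ T.subEdges χ c₀ c) (hce : χ e = c') (hne : c' ≠ c) :
    T.subEdges χ c₀ c' ⊆ T.subEdges χ c₀ c := by
  intro a ha
  obtain ⟨har, hanc⟩ := (mem_subEdges hc'c₀).mp ha
  exact (mem_subEdges hcc₀).mpr
    ⟨har, anc_trans (topEdge_anc_topEdge hχ hcc₀ hc he hce hne).1 hanc⟩

lemma vcol_facts (hχ : T.IsMonotone χ) {c c' : ℕ} (hcc₀ : c ≠ c₀)
    (hc : ∃ e : T.V, e ≠ T.root ∧ χ e = c) {e : T.V}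
    (he : e ∈ T.subEdges χ c₀ c) (hce : χ e = c') (hne : c' ≠ c) :
    T.vcol χ c' ≠ T.root ∧ T.Anc (T.topEdge χ c) (T.vcol χ c') := by
  obtain ⟨h1, h2⟩ := topEdge_anc_topEdge hχ hcc₀ hc he hce hne
  have hanc : T.Anc (T.topEdge χ c) (T.vcol χ c') :=
    anc_parent_of_anc h1 (fun h => h2 h.symm)
  exact ⟨fun h => (topEdge_spec hχ hc).1 (eq_root_of_anc_root (h ▸ hanc)),
    hanc⟩

/-- The antisymmetry argument: if `b₁`'s parent color is `c`, `b₂` is a color of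
`T(c)` other than `c`, `b₁ ≠ b₂`, then `topEdge b₂` cannot be an ancestor of
`topEdge b₁`. -/
lemma asym (hχ : T.IsMonotone χ) (hc₀ : ∀ e : T.V, e ≠ T.root → χ e ≠ c₀)
    {c b₁ b₂ : ℕ} (hc : ∃ e : T.V, e ≠ T.root ∧ χ e = c)
    (hb₁ : ∃ e : T.V, e ≠ T.root ∧ χ e = b₁)
    (hb₁v : T.vcol χ b₁ ≠ T.root) (hb₁p : χ (T.vcol χ b₁) = c)
    {e₂ : T.V} (he₂ : e₂ ∈ T.subEdges χ c₀ c) (hce₂ : χ e₂ = b₂) (hb₂ne : b₂ ≠ c)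
    (hne : b₁ ≠ b₂)
    (h : T.Anc (T.topEdge χ b₂) (T.topEdge χ b₁)) : False := by
  have hcc₀ : c ≠ c₀ := ne_c0 hc₀ hc
  have hb₂ : ∃ e : T.V, e ≠ T.root ∧ χ e = b₂ :=
    ⟨e₂, ((mem_subEdges hcc₀).mp he₂).1, hce₂⟩
  have hb₂c₀ : b₂ ≠ c₀ := ne_c0 hc₀ hb₂
  obtain ⟨hr1, hcol1, _⟩ := topEdge_spec hχ hb₁
  obtain ⟨hr2, hcol2, _⟩ := topEdge_spec hχ hb₂
  have htne : T.topEdge χ b₂ ≠ T.topEdge χ b₁ := by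
    intro hh; exact hne (by rw [← hcol1, ← hh, hcol2])
  -- vcol b₁ is an edge of T(b₂) colored c
  have hv : T.vcol χ b₁ ∈ T.subEdges χ c₀ b₂ :=
    (mem_subEdges hb₂c₀).mpr ⟨hb₁v, anc_parent_of_anc h htne⟩
  -- hence topEdge c is strictly below topEdge b₂
  have h1 := topEdge_anc_topEdge hχ hb₂c₀ hb₂ hv hb₁p (fun hh => hb₂ne hh.symm)
  -- but topEdge b₂ is strictly below topEdge c
  have h2 := topEdge_anc_topEdge hχ hcc₀ hc he₂ hce₂ hb₂ne
  exact h1.2 (anc_antisymm h2.1 h1.1)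

end FinTree
namespace FinTree

variable {T : FinTree} {χ : T.V → ℕ} {c₀ : ℕ}

lemma pathColors (hχ : T.IsMonotone χ) {c : ℕ}
    (hc : ∃ e : T.V, e ≠ T.root ∧ χ e = c) {e : T.V} (he : e ≠ T.root) (hce : χ e = c) :
    (T.pathToRoot e).image χ = insert c ((T.pathToRoot (T.vcol χ c)).image χ) := by
  obtain ⟨hr, hcol, hmin⟩ := topEdge_spec hχ hc
  have hte : T.Anc (T.topEdge χ c) e := hmin e he hce
  ext a
  simp only [Finset.mem_image, Finset.mem_insert, mem_pathToRoot]
  constructor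
  · rintro ⟨w, ⟨hw, hanc⟩, rfl⟩
    rcases anc_total_of_anc hte hanc with h | h
    · left
      have := (hχ (T.topEdge χ c) e hr he (by rw [hcol, hce])).2 w hw h hanc
      rw [hcol] at this; exact this
    · by_cases hweq : w = T.topEdge χ c
      · left; rw [hweq, hcol]
      · right; exact ⟨w, ⟨hw, anc_parent_of_anc h hweq⟩, rfl⟩
  · rintro (rfl | ⟨w, ⟨hw, hanc⟩, rfl⟩)
    · exact ⟨e, ⟨he, T.anc_refl e⟩, hce⟩
    · exact ⟨w, ⟨hw, anc_trans (anc_trans hanc (T.anc_parent _)) hte⟩, rfl⟩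

lemma c_notin_upper (hχ : T.IsMonotone χ) {c : ℕ}
    (hc : ∃ e : T.V, e ≠ T.root ∧ χ e = c) :
    c ∉ (T.pathToRoot (T.vcol χ c)).image χ := by
  obtain ⟨hr, hcol, hmin⟩ := topEdge_spec hχ hc
  rintro h
  simp only [Finset.mem_image, mem_pathToRoot] at h
  obtain ⟨w, ⟨hw, hanc⟩, hcw⟩ := h
  have h1 : T.Anc (T.topEdge χ c) w := hmin w hw hcw
  have h2 : T.Anc w (T.topEdge χ c) := anc_trans hanc (T.anc_parent _)
  have hweq : w = T.topEdge χ c := anc_antisymm h2 h1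
  rw [hweq] at hanc
  have : T.topEdge χ c = T.vcol χ c := anc_antisymm hanc (T.anc_parent _)
  exact hr (eq_root_of_parent_fixed this.symm)

/-- The recursion `φ(b) = κ(b) + φ(ρ(b))` in the case `ρ(b) = χ(v_b) = c`. -/
lemma phi_eq_kappa_add (hχ : T.IsMonotone χ) (hc₀ : ∀ e : T.V, e ≠ T.root → χ e ≠ c₀)
    {b c : ℕ} (hb : ∃ e : T.V, e ≠ T.root ∧ χ e = b)
    (hbv : T.vcol χ b ≠ T.root) (hbp : χ (T.vcol χ b) = c) :
    T.phi χ c₀ b = T.kappa χ c₀ b + T.phi χ c₀ c := by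
  have hc : ∃ e : T.V, e ≠ T.root ∧ χ e = c := ⟨T.vcol χ b, hbv, hbp⟩
  rw [phi, if_neg (ne_c0 hc₀ hb), phi, if_neg (ne_c0 hc₀ hc),
    pathColors hχ hc hbv hbp, Finset.sum_insert (c_notin_upper hχ hc)]

lemma subEdges_subset_parent (hχ : T.IsMonotone χ) (hc₀ : ∀ e : T.V, e ≠ T.root → χ e ≠ c₀)
    {b : ℕ} (hb : ∃ e : T.V, e ≠ T.root ∧ χ e = b) :
    T.subEdges χ c₀ b ⊆ T.subEdges χ c₀ (T.parentColor χ c₀ b) := by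
  have hbc₀ := ne_c0 hc₀ hb
  by_cases hv : T.vcol χ b = T.root
  · rw [parentColor, if_pos hv, subEdges, subEdges, if_neg hbc₀, if_pos rfl]
    exact Finset.filter_subset _ _
  · rw [parentColor, if_neg hv]
    set p := χ (T.vcol χ b) with hp
    have hpne : ∃ e : T.V, e ≠ T.root ∧ χ e = p := ⟨T.vcol χ b, hv, rfl⟩
    have hpc₀ : p ≠ c₀ := ne_c0 hc₀ hpne
    intro a ha
    obtain ⟨har, hanc⟩ := (mem_subEdges hbc₀).mp ha
    refine (mem_subEdges hpc₀).mpr ⟨har, ?_⟩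
    have h1 : T.Anc (T.topEdge χ p) (T.vcol χ b) := (topEdge_spec hχ hpne).2.2 _ hv rfl
    exact anc_trans (anc_trans h1 (T.anc_parent _)) hanc

lemma card_subEdges_pos (hχ : T.IsMonotone χ) (hc₀ : ∀ e : T.V, e ≠ T.root → χ e ≠ c₀)
    {b : ℕ} (hb : ∃ e : T.V, e ≠ T.root ∧ χ e = b) :
    0 < (T.subEdges χ c₀ b).card :=
  Finset.card_pos.mpr ⟨_, topEdge_mem_subEdges hχ (ne_c0 hc₀ hb) hb⟩

lemma one_le_kappa (hχ : T.IsMonotone χ) (hc₀ : ∀ e : T.V, e ≠ T.root → χ e ≠ c₀)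
    {b : ℕ} (hb : ∃ e : T.V, e ≠ T.root ∧ χ e = b) :
    1 ≤ T.kappa χ c₀ b := by
  have hn := card_subEdges_pos hχ hc₀ hb
  have hnN := Finset.card_le_card (subEdges_subset_parent hχ hc₀ hb)
  rw [kappa]
  have : (0:ℤ) ≤ ⌊Real.logb 2 (((T.subEdges χ c₀ (T.parentColor χ c₀ b)).card : ℝ) /
      ((T.subEdges χ c₀ b).card : ℝ))⌋ := by
    apply Int.floor_nonneg.mpr
    apply Real.logb_nonneg one_lt_two
    rw [le_div_iff₀ (by exact_mod_cast hn)]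
    simpa using (Nat.cast_le (α := ℝ)).mpr hnN
  omega

lemma zpow_neg_two_kappa_lt (hχ : T.IsMonotone χ) (hc₀ : ∀ e : T.V, e ≠ T.root → χ e ≠ c₀)
    {b : ℕ} (hb : ∃ e : T.V, e ≠ T.root ∧ χ e = b) :
    (2:ℝ) ^ (-(2 * T.kappa χ c₀ b)) <
      (1/2) * (((T.subEdges χ c₀ b).card : ℝ) /
        ((T.subEdges χ c₀ (T.parentColor χ c₀ b)).card : ℝ)) := by
  set n := (T.subEdges χ c₀ b).card with hn
  set N := (T.subEdges χ c₀ (T.parentColor χ c₀ b)).card with hN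
  have hnpos : (0:ℝ) < n := by exact_mod_cast card_subEdges_pos hχ hc₀ hb
  have hNpos : (0:ℝ) < N := lt_of_lt_of_le hnpos
    (by exact_mod_cast Finset.card_le_card (subEdges_subset_parent hχ hc₀ hb))
  have hκ := one_le_kappa hχ hc₀ hb
  set κ := T.kappa χ c₀ b with hκdef
  have hratio : (0:ℝ) < (N:ℝ)/(n:ℝ) := div_pos hNpos hnpos
  -- 2^κ > N/n
  have hlt : (N:ℝ)/(n:ℝ) < (2:ℝ) ^ κ := by
    have h1 : Real.logb 2 ((N:ℝ)/(n:ℝ)) < (κ : ℝ) := by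
      rw [hκdef, kappa, ← hN, ← hn]
      push_cast
      exact Int.lt_floor_add_one _
    calc (N:ℝ)/(n:ℝ) = (2:ℝ) ^ (Real.logb 2 ((N:ℝ)/(n:ℝ))) :=
          (Real.rpow_logb two_pos (by norm_num) hratio).symm
      _ < (2:ℝ) ^ ((κ:ℝ)) := by
          exact Real.rpow_lt_rpow_left_iff (x := 2) one_lt_two |>.mpr h1
      _ = (2:ℝ) ^ κ := Real.rpow_intCast 2 κ
  have hinv : (2:ℝ) ^ (-κ) < (n:ℝ)/(N:ℝ) := by
    rw [zpow_neg]
    calc ((2:ℝ) ^ κ)⁻¹ < ((N:ℝ)/(n:ℝ))⁻¹ := by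
          exact inv_strictAnti₀ hratio hlt
      _ = (n:ℝ)/(N:ℝ) := by rw [inv_div]
  have hhalf : (2:ℝ) ^ (-κ) ≤ 1/2 := by
    calc (2:ℝ) ^ (-κ) ≤ (2:ℝ) ^ (-1 : ℤ) := by
          apply zpow_le_zpow_right₀ one_le_two; omega
      _ = 1/2 := by norm_num
  have hpos : (0:ℝ) < (2:ℝ) ^ (-κ) := zpow_pos two_pos _
  calc (2:ℝ) ^ (-(2*κ)) = (2:ℝ) ^ (-κ) * (2:ℝ) ^ (-κ) := by
        rw [← zpow_add₀ (two_ne_zero)]; ring_nf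
    _ < (1/2) * ((n:ℝ)/(N:ℝ)) := by
        apply mul_lt_mul' hhalf hinv (le_of_lt hpos) (by norm_num)

end FinTree
namespace FinTree

variable {T : FinTree} {χ : T.V → ℕ} {c₀ : ℕ}

lemma coverage (hχ : T.IsMonotone χ) (hc₀ : ∀ e : T.V, e ≠ T.root → χ e ≠ c₀)
    {c : ℕ} (hc : ∃ e : T.V, e ≠ T.root ∧ χ e = c) :
    ∀ m : ℕ, ∀ c' : ℕ, T.depth (T.topEdge χ c') ≤ m →
    c' ∈ ((T.subEdges χ c₀ c).image χ).erase c →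
    ∃ b ∈ ((T.subEdges χ c₀ c).image χ).erase c,
      T.vcol χ b ≠ T.root ∧ χ (T.vcol χ b) = c ∧ c' ∈ (T.subEdges χ c₀ b).image χ := by
  have hcc₀ : c ≠ c₀ := ne_c0 hc₀ hc
  intro m
  induction m with
  | zero =>
    intro c' hd hK
    exfalso
    obtain ⟨hne, himg⟩ := Finset.mem_erase.mp hK
    obtain ⟨e, heE, hce⟩ := Finset.mem_image.mp himg
    have hc' : ∃ e : T.V, e ≠ T.root ∧ χ e = c' := ⟨e, ((mem_subEdges hcc₀).mp heE).1, hce⟩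
    exact (topEdge_spec hχ hc').1 (eq_root_of_depth_zero (Nat.le_zero.mp hd))
  | succ m ih =>
    intro c' hd hK
    obtain ⟨hne, himg⟩ := Finset.mem_erase.mp hK
    obtain ⟨e, heE, hce⟩ := Finset.mem_image.mp himg
    have hc' : ∃ e : T.V, e ≠ T.root ∧ χ e = c' := ⟨e, ((mem_subEdges hcc₀).mp heE).1, hce⟩
    obtain ⟨hvr, hvanc⟩ := vcol_facts hχ hcc₀ hc heE hce hne
    by_cases hpc : χ (T.vcol χ c') = c
    · refine ⟨c', hK, hvr, hpc, ?_⟩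
      exact Finset.mem_image.mpr ⟨T.topEdge χ c',
        topEdge_mem_subEdges hχ (ne_c0 hc₀ hc') hc', (topEdge_spec hχ hc').2.1⟩
    · set p := χ (T.vcol χ c') with hp
      have hpNE : ∃ e : T.V, e ≠ T.root ∧ χ e = p := ⟨T.vcol χ c', hvr, rfl⟩
      have hvE : T.vcol χ c' ∈ T.subEdges χ c₀ c := (mem_subEdges hcc₀).mpr ⟨hvr, hvanc⟩
      have hpK : p ∈ ((T.subEdges χ c₀ c).image χ).erase c :=
        Finset.mem_erase.mpr ⟨hpc, Finset.mem_image.mpr ⟨_, hvE, rfl⟩⟩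
      have hdp : T.depth (T.topEdge χ p) ≤ m := by
        have h1 : T.Anc (T.topEdge χ p) (T.vcol χ c') := (topEdge_spec hχ hpNE).2.2 _ hvr rfl
        have h2 : T.depth (T.vcol χ c') < T.depth (T.topEdge χ c') := by
          rw [vcol]
          exact depth_parent_lt (topEdge_spec hχ hc').1
        have := anc_depth_le h1
        omega
      obtain ⟨b, hbK, hbv, hbp, hpimg⟩ := ih p hdp hpK
      refine ⟨b, hbK, hbv, hbp, ?_⟩
      obtain ⟨hbne, hbimg⟩ := Finset.mem_erase.mp hbK
      obtain ⟨eb, hebE, hceb⟩ := Finset.mem_image.mp hbimg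
      have hbNE : ∃ e : T.V, e ≠ T.root ∧ χ e = b := ⟨eb, ((mem_subEdges hcc₀).mp hebE).1, hceb⟩
      have hbc₀ : b ≠ c₀ := ne_c0 hc₀ hbNE
      -- Anc (topEdge b) (topEdge p)
      obtain ⟨ep, hepE, hcep⟩ := Finset.mem_image.mp hpimg
      have hanc1 : T.Anc (T.topEdge χ b) (T.topEdge χ p) := by
        by_cases hpb : p = b
        · rw [hpb]; exact T.anc_refl _
        · exact (topEdge_anc_topEdge hχ hbc₀ hbNE hepE hcep hpb).1
      have hanc2 : T.Anc (T.topEdge χ b) (T.topEdge χ c') := by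
        refine anc_trans hanc1 (anc_trans ((topEdge_spec hχ hpNE).2.2 _ hvr rfl) ?_)
        rw [vcol]; exact T.anc_parent _
      exact Finset.mem_image.mpr ⟨T.topEdge χ c',
        (mem_subEdges hbc₀).mpr ⟨(topEdge_spec hχ hc').1, hanc2⟩, (topEdge_spec hχ hc').2.1⟩

end FinTree
namespace FinTree

variable {T : FinTree} {χ : T.V → ℕ} {c₀ : ℕ}

lemma main_induction (hχ : T.IsMonotone χ) (hc₀ : ∀ e : T.V, e ≠ T.root → χ e ≠ c₀) :
    ∀ n : ℕ, ∀ c : ℕ, (∃ e : T.V, e ≠ T.root ∧ χ e = c) →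
    (T.subEdges χ c₀ c).card ≤ n →
    (∀ c' ∈ ((T.subEdges χ c₀ c).image χ).erase c,
        1 ≤ T.phi χ c₀ c' - T.phi χ c₀ c) ∧
    ∑ c' ∈ ((T.subEdges χ c₀ c).image χ).erase c,
        (2:ℝ) ^ (-(2 * (T.phi χ c₀ c' - T.phi χ c₀ c))) < 1 := by
  intro n
  induction n with
  | zero =>
    intro c hc hcard
    have := card_subEdges_pos hχ hc₀ hc
    omega
  | succ n ih =>
    intro c hc hcard
    have hcc₀ : c ≠ c₀ := ne_c0 hc₀ hc
    set K := ((T.subEdges χ c₀ c).image χ).erase c with hK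
    set D : Finset ℕ := K.filter (fun b => T.vcol χ b ≠ T.root ∧ χ (T.vcol χ b) = c) with hDdef
    -- basic facts for members of K
    have hKfacts : ∀ b ∈ K, (∃ e : T.V, e ≠ T.root ∧ χ e = b) ∧ b ≠ c ∧ b ≠ c₀ ∧
        T.Anc (T.topEdge χ c) (T.topEdge χ b) ∧ T.topEdge χ b ≠ T.topEdge χ c := by
      intro b hb
      obtain ⟨hbne, hbimg⟩ := Finset.mem_erase.mp hb
      obtain ⟨e, heE, hce⟩ := Finset.mem_image.mp hbimg
      have hbNE : ∃ e : T.V, e ≠ T.root ∧ χ e = b := ⟨e, ((mem_subEdges hcc₀).mp heE).1, hce⟩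
      exact ⟨hbNE, hbne, ne_c0 hc₀ hbNE,
        (topEdge_anc_topEdge hχ hcc₀ hc heE hce hbne).1,
        (topEdge_anc_topEdge hχ hcc₀ hc heE hce hbne).2⟩
    -- subEdges of members of K are contained in subEdges c
    have hKsub : ∀ b ∈ K, T.subEdges χ c₀ b ⊆ T.subEdges χ c₀ c := by
      intro b hb
      obtain ⟨hbNE, hbne, hbc₀, hanc, _⟩ := hKfacts b hb
      intro a ha
      obtain ⟨har, hanc'⟩ := (mem_subEdges hbc₀).mp ha
      exact (mem_subEdges hcc₀).mpr ⟨har, anc_trans hanc hanc'⟩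
    -- strict card decrease
    have hKcard : ∀ b ∈ K, (T.subEdges χ c₀ b).card ≤ n := by
      intro b hb
      obtain ⟨hbNE, hbne, hbc₀, hanc, hne'⟩ := hKfacts b hb
      have hss : T.subEdges χ c₀ b ⊂ T.subEdges χ c₀ c := by
        refine ⟨hKsub b hb, fun hsup => ?_⟩
        have : T.topEdge χ c ∈ T.subEdges χ c₀ b :=
          hsup (topEdge_mem_subEdges hχ hcc₀ hc)
        have h2 := ((mem_subEdges hbc₀).mp this).2
        exact hne' (anc_antisymm hanc h2).symm
      have := Finset.card_lt_card hss
      omega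
    -- every color of a subtree of `b ∈ K` lies in K
    have hKcol : ∀ b ∈ K, (T.subEdges χ c₀ b).image χ ⊆ K := by
      intro b hb a ha
      obtain ⟨hbNE, hbne, hbc₀, hanc, hne'⟩ := hKfacts b hb
      obtain ⟨e, heE, hce⟩ := Finset.mem_image.mp ha
      refine Finset.mem_erase.mpr ⟨?_, Finset.mem_image.mpr ⟨e, hKsub b hb heE, hce⟩⟩
      -- a ≠ c
      intro hac
      rw [hac] at hce
      have := topEdge_anc_topEdge hχ hbc₀ hbNE heE hce (fun h => hbne h.symm)
      exact this.2 (anc_antisymm hanc this.1)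
    -- topEdge of any color of subtree of b is below topEdge b
    have hKtop : ∀ b ∈ K, ∀ a ∈ (T.subEdges χ c₀ b).image χ,
        T.topEdge χ a ∈ T.subEdges χ c₀ b := by
      intro b hb a ha
      obtain ⟨hbNE, hbne, hbc₀, _, _⟩ := hKfacts b hb
      obtain ⟨e, heE, hce⟩ := Finset.mem_image.mp ha
      have haNE : ∃ e' : T.V, e' ≠ T.root ∧ χ e' = a := ⟨e, ((mem_subEdges hbc₀).mp heE).1, hce⟩
      by_cases hab : a = b
      · rw [hab]; exact topEdge_mem_subEdges hχ hbc₀ hbNE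
      · exact (mem_subEdges hbc₀).mpr ⟨(topEdge_spec hχ haNE).1,
          (topEdge_anc_topEdge hχ hbc₀ hbNE heE hce hab).1⟩
    -- D facts
    have hDfacts : ∀ b ∈ D, b ∈ K ∧ T.vcol χ b ≠ T.root ∧ χ (T.vcol χ b) = c := by
      intro b hb
      obtain ⟨h1, h2⟩ := Finset.mem_filter.mp hb
      exact ⟨h1, h2.1, h2.2⟩
    -- pairwise edge-disjointness of the subtrees of D
    have hedisj : ∀ b₁ ∈ D, ∀ b₂ ∈ D, b₁ ≠ b₂ →
        Disjoint (T.subEdges χ c₀ b₁) (T.subEdges χ c₀ b₂) := by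
      intro b₁ hb₁ b₂ hb₂ hne
      obtain ⟨hb₁K, hb₁v, hb₁p⟩ := hDfacts b₁ hb₁
      obtain ⟨hb₂K, hb₂v, hb₂p⟩ := hDfacts b₂ hb₂
      obtain ⟨hb₁NE, hb₁ne, hb₁c₀, _, _⟩ := hKfacts b₁ hb₁K
      obtain ⟨hb₂NE, hb₂ne, hb₂c₀, _, _⟩ := hKfacts b₂ hb₂K
      obtain ⟨e₁, he₁E, hce₁⟩ := Finset.mem_image.mp (Finset.mem_erase.mp hb₁K).2
      obtain ⟨e₂, he₂E, hce₂⟩ := Finset.mem_image.mp (Finset.mem_erase.mp hb₂K).2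
      rw [Finset.disjoint_left]
      intro e he1 he2
      have ha1 := ((mem_subEdges hb₁c₀).mp he1).2
      have ha2 := ((mem_subEdges hb₂c₀).mp he2).2
      rcases anc_total_of_anc ha1 ha2 with h | h
      · exact asym hχ hc₀ hc hb₂NE hb₂v hb₂p he₁E hce₁ hb₁ne (fun hh => hne hh.symm) h
      · exact asym hχ hc₀ hc hb₁NE hb₁v hb₁p he₂E hce₂ hb₂ne hne h
    -- pairwise color-disjointness
    have hcdisj : (↑D : Set ℕ).Pairwise fun b₁ b₂ =>
        Disjoint ((T.subEdges χ c₀ b₁).image χ) ((T.subEdges χ c₀ b₂).image χ) := by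
      intro b₁ hb₁ b₂ hb₂ hne
      rw [Finset.disjoint_left]
      intro a ha1 ha2
      have h1 := hKtop b₁ (hDfacts b₁ hb₁).1 a ha1
      have h2 := hKtop b₂ (hDfacts b₂ hb₂).1 a ha2
      exact (Finset.disjoint_left.mp (hedisj b₁ hb₁ b₂ hb₂ hne)) h1 h2
    -- the covering identity
    have hcover : K = D.biUnion (fun b => (T.subEdges χ c₀ b).image χ) := by
      apply Finset.Subset.antisymm
      · intro c' hc'
        obtain ⟨b, hbK, hbv, hbp, himg⟩ :=
          coverage hχ hc₀ hc (T.depth (T.topEdge χ c')) c' le_rfl hc'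
        exact Finset.mem_biUnion.mpr
          ⟨b, Finset.mem_filter.mpr ⟨hbK, hbv, hbp⟩, himg⟩
      · intro a ha
        obtain ⟨b, hbD, haimg⟩ := Finset.mem_biUnion.mp ha
        exact hKcol b (hDfacts b hbD).1 haimg
    constructor
    · -- the φ lower bound
      intro c' hc'
      rw [hcover] at hc'
      obtain ⟨b, hbD, hc'img⟩ := Finset.mem_biUnion.mp hc'
      obtain ⟨hbK, hbv, hbp⟩ := hDfacts b hbD
      obtain ⟨hbNE, hbne, hbc₀, _, _⟩ := hKfacts b hbK
      have hphib : T.phi χ c₀ b = T.kappa χ c₀ b + T.phi χ c₀ c :=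
        phi_eq_kappa_add hχ hc₀ hbNE hbv hbp
      have hκ := one_le_kappa hχ hc₀ hbNE
      by_cases hc'b : c' = b
      · rw [hc'b, hphib]; omega
      · have hc'K : c' ∈ ((T.subEdges χ c₀ b).image χ).erase b :=
          Finset.mem_erase.mpr ⟨hc'b, hc'img⟩
        have := (ih b hbNE (hKcard b hbK)).1 c' hc'K
        omega
    · -- the sum bound
      rw [hcover, Finset.sum_biUnion hcdisj]
      set N := (T.subEdges χ c₀ c).card with hN
      have hNpos : (0:ℝ) < N := by exact_mod_cast card_subEdges_pos hχ hc₀ hc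
      -- inner bound for each b ∈ D
      have hinner : ∀ b ∈ D,
          ∑ c' ∈ (T.subEdges χ c₀ b).image χ,
            (2:ℝ) ^ (-(2 * (T.phi χ c₀ c' - T.phi χ c₀ c))) <
          ((T.subEdges χ c₀ b).card : ℝ) / N := by
        intro b hbD
        obtain ⟨hbK, hbv, hbp⟩ := hDfacts b hbD
        obtain ⟨hbNE, hbne, hbc₀, _, _⟩ := hKfacts b hbK
        have hphib : T.phi χ c₀ b = T.kappa χ c₀ b + T.phi χ c₀ c :=
          phi_eq_kappa_add hχ hc₀ hbNE hbv hbp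
        have hbmem : b ∈ (T.subEdges χ c₀ b).image χ :=
          Finset.mem_image.mpr ⟨T.topEdge χ b, topEdge_mem_subEdges hχ hbc₀ hbNE,
            (topEdge_spec hχ hbNE).2.1⟩
        have hfactor : ∀ c' : ℕ,
            (2:ℝ) ^ (-(2 * (T.phi χ c₀ c' - T.phi χ c₀ c))) =
            (2:ℝ) ^ (-(2 * T.kappa χ c₀ b)) *
              (2:ℝ) ^ (-(2 * (T.phi χ c₀ c' - T.phi χ c₀ b))) := by
          intro c'
          rw [← zpow_add₀ (two_ne_zero : (2:ℝ) ≠ 0)]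
          congr 1
          rw [hphib]; ring
        calc ∑ c' ∈ (T.subEdges χ c₀ b).image χ,
              (2:ℝ) ^ (-(2 * (T.phi χ c₀ c' - T.phi χ c₀ c)))
            = (2:ℝ) ^ (-(2 * T.kappa χ c₀ b)) *
              ∑ c' ∈ (T.subEdges χ c₀ b).image χ,
                (2:ℝ) ^ (-(2 * (T.phi χ c₀ c' - T.phi χ c₀ b))) := by
              rw [Finset.mul_sum]
              exact Finset.sum_congr rfl (fun c' _ => hfactor c')
          _ < (2:ℝ) ^ (-(2 * T.kappa χ c₀ b)) * 2 := by
              apply mul_lt_mul_of_pos_left _ (zpow_pos two_pos _)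
              rw [← Finset.add_sum_erase _ _ hbmem]
              have h1 : (2:ℝ) ^ (-(2 * (T.phi χ c₀ b - T.phi χ c₀ b))) = 1 := by
                norm_num
              rw [h1]
              have h2 := (ih b hbNE (hKcard b hbK)).2
              linarith
          _ < ((1/2) * (((T.subEdges χ c₀ b).card : ℝ) / N)) * 2 := by
              apply mul_lt_mul_of_pos_right _ two_pos
              have := zpow_neg_two_kappa_lt hχ hc₀ hbNE
              have hpc : T.parentColor χ c₀ b = c := by
                rw [parentColor, if_neg hbv, hbp]
              rwa [hpc, ← hN] at this
          _ = ((T.subEdges χ c₀ b).card : ℝ) / N := by ring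
      -- sum over D
      by_cases hDe : D = ∅
      · rw [hDe]; simp
      · have hDne : D.Nonempty := Finset.nonempty_iff_ne_empty.mpr hDe
        calc ∑ b ∈ D, ∑ c' ∈ (T.subEdges χ c₀ b).image χ,
              (2:ℝ) ^ (-(2 * (T.phi χ c₀ c' - T.phi χ c₀ c)))
            < ∑ b ∈ D, ((T.subEdges χ c₀ b).card : ℝ) / N :=
              Finset.sum_lt_sum_of_nonempty hDne hinner
          _ ≤ 1 := by
              rw [← Finset.sum_div]
              rw [div_le_one hNpos]
              have hcardsum : ∑ b ∈ D, ((T.subEdges χ c₀ b).card) =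
                  (D.biUnion (fun b => T.subEdges χ c₀ b)).card :=
                (Finset.card_biUnion hedisj).symm
              have hsub : D.biUnion (fun b => T.subEdges χ c₀ b) ⊆ T.subEdges χ c₀ c := by
                intro e he
                obtain ⟨b, hbD, heb⟩ := Finset.mem_biUnion.mp he
                exact hKsub b (hDfacts b hbD).1 heb
              have := Finset.card_le_card hsub
              push_cast
              rw [← Nat.cast_sum]
              exact_mod_cast (hcardsum ▸ this)
      
end FinTree
/-- `Σ_{c' ∈ χ(E(T(c))) \ {c}} 2^{−C(φ(c')−φ(c))} < 2^{2−C}` for `C ≥ 2`. -/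
theorem sum_exp_phi_lt (T : FinTree) (χ : T.V → ℕ) (hχ : T.IsMonotone χ)
    (c₀ : ℕ) (hc₀ : ∀ e : T.V, e ≠ T.root → χ e ≠ c₀)
    (c : ℕ) (hc : ∃ e : T.V, e ≠ T.root ∧ χ e = c) (C : ℝ) (hC : 2 ≤ C) :
    ∑ c' ∈ ((T.subEdges χ c₀ c).image χ).erase c,
        (2 : ℝ) ^ (-(C * ((T.phi χ c₀ c' - T.phi χ c₀ c : ℤ) : ℝ))) <
      (2 : ℝ) ^ (2 - C) := by
  obtain ⟨h1, h2⟩ := FinTree.main_induction hχ hc₀ (T.subEdges χ c₀ c).card c hc le_rfl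
  have hpow_pos : (0:ℝ) < (2:ℝ) ^ (2 - C) := Real.rpow_pos_of_pos two_pos _
  have hterm : ∀ c' ∈ ((T.subEdges χ c₀ c).image χ).erase c,
      (2 : ℝ) ^ (-(C * ((T.phi χ c₀ c' - T.phi χ c₀ c : ℤ) : ℝ))) ≤
        (2 : ℝ) ^ (2 - C) *
          (2 : ℝ) ^ (-(2 * (T.phi χ c₀ c' - T.phi χ c₀ c))) := by
    intro c' hc'
    have hd : (1:ℝ) ≤ ((T.phi χ c₀ c' - T.phi χ c₀ c : ℤ) : ℝ) := by
      exact_mod_cast h1 c' hc'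
    set d : ℝ := ((T.phi χ c₀ c' - T.phi χ c₀ c : ℤ) : ℝ) with hdd
    have hz : ((2:ℝ) ^ (-(2 * (T.phi χ c₀ c' - T.phi χ c₀ c)) : ℤ)) =
        (2:ℝ) ^ ((-(2 * d)) : ℝ) := by
      rw [← Real.rpow_intCast 2 (-(2 * (T.phi χ c₀ c' - T.phi χ c₀ c)))]
      congr 1
      push_cast [hdd]
      ring
    rw [hz, ← Real.rpow_add two_pos]
    apply Real.rpow_le_rpow_left_iff (x := 2) one_lt_two |>.mpr
    nlinarith
  calc ∑ c' ∈ ((T.subEdges χ c₀ c).image χ).erase c,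
        (2 : ℝ) ^ (-(C * ((T.phi χ c₀ c' - T.phi χ c₀ c : ℤ) : ℝ)))
      ≤ ∑ c' ∈ ((T.subEdges χ c₀ c).image χ).erase c,
        (2 : ℝ) ^ (2 - C) * (2 : ℝ) ^ (-(2 * (T.phi χ c₀ c' - T.phi χ c₀ c))) :=
        Finset.sum_le_sum hterm
    _ = (2 : ℝ) ^ (2 - C) * ∑ c' ∈ ((T.subEdges χ c₀ c).image χ).erase c,
        (2 : ℝ) ^ (-(2 * (T.phi χ c₀ c' - T.phi χ c₀ c))) := by
        rw [Finset.mul_sum]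
    _ < (2 : ℝ) ^ (2 - C) * 1 := mul_lt_mul_of_pos_left h2 hpow_pos
    _ = (2 : ℝ) ^ (2 - C) := mul_one _

end
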